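/- With s(n) the number of sd-partitions of n (and s(0)=1), one has s(2k-1) = s(2k) for all k ≥ 1. -/

import Mathlib

/-- The parts of a partition as a weakly decreasing list. -/
def sortedParts {n : ℕ} (mu : n.Partition) : List ℕ :=
  (Multiset.sort mu.parts (· ≤ ·)).reverse
/-- A list of parts is *strongly decreasing* if each entry (except possibly the
last) is strictly greater than the sum of all later entries. -/
def StronglyDecreasing : List ℕ → Prop
  | [] => True
  | a :: r => (r = [] ∨ r.sum < a) ∧ StronglyDecreasing r
/-- `s n` is the number of strongly decreasing (sd-)partitions of `n`
(so `s 0 = 1`, counting the empty partition). -/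
noncomputable def s (n : ℕ) : ℕ :=
  Nat.card {μ : n.Partition // StronglyDecreasing (sortedParts μ)}

/-! An sd-list is strictly decreasing, so an sd-partition is the same as a strongly decreasing
list of positive integers with the right sum. Raising the first (largest) entry `a` by one
maps sd-lists of `n` injectively to sd-lists of `n + 1`. For odd `n` this is onto: in an
sd-list `a :: r` of the even number `n + 1`, `a > r.sum` and `a + r.sum` is even, so the gap
`a - r.sum` is at least `2` and lowering `a` by one leaves an sd-list. -/

theorem StronglyDecreasing.pairwise_gt : ∀ {l : List ℕ}, StronglyDecreasing l → l.Pairwise (· > ·)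
  | [], _ => List.Pairwise.nil
  | a :: r, ⟨hhead, htail⟩ => by
    refine List.pairwise_cons.2 ⟨fun x hx => ?_, htail.pairwise_gt⟩
    rcases hhead with rfl | hlt
    · simp at hx
    · exact (List.single_le_sum (fun _ _ => Nat.zero_le _) x hx).trans_lt hlt

theorem StronglyDecreasing.cons_add_one {a : ℕ} {r : List ℕ}
    (h : StronglyDecreasing (a :: r)) : StronglyDecreasing ((a + 1) :: r) :=
  ⟨h.1.imp_right Nat.lt_succ_of_lt, h.2⟩

theorem StronglyDecreasing.cons_sub_one {a : ℕ} {r : List ℕ} (h : StronglyDecreasing (a :: r))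
    (ha : 0 < a) (hpar : Even (a + r.sum)) :
    1 < a ∧ StronglyDecreasing ((a - 1) :: r) := by
  obtain ⟨m, hm⟩ := hpar
  rcases h with ⟨rfl | hlt, htail⟩
  · simp only [List.sum_nil] at hm
    exact ⟨by omega, Or.inl rfl, htail⟩
  · exact ⟨by omega, Or.inr (by omega), htail⟩

theorem coe_sortedParts {n : ℕ} (μ : n.Partition) : (sortedParts μ : Multiset ℕ) = μ.parts := by
  rw [sortedParts, Multiset.coe_reverse, Multiset.sort_eq]

theorem sortedParts_eq_of_pairwise {n : ℕ} {μ : n.Partition} {l : List ℕ}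
    (hl : l.Pairwise (· ≥ ·)) (hμ : μ.parts = l) : sortedParts μ = l := by
  rw [sortedParts, hμ, ← Multiset.coe_reverse, Multiset.coe_sort,
    List.mergeSort_eq_self _ (List.pairwise_reverse.2 hl), List.reverse_reverse]

def sdLists (n : ℕ) : Set (List ℕ) :=
  {l | StronglyDecreasing l ∧ (∀ x ∈ l, 0 < x) ∧ l.sum = n}

def sdPartitionEquivSdLists (n : ℕ) :
    {μ : n.Partition // StronglyDecreasing (sortedParts μ)} ≃ sdLists n where
  toFun μ := ⟨sortedParts μ.1, μ.2,
    fun x hx => μ.1.parts_pos (by rw [← coe_sortedParts]; exact_mod_cast hx),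
    by rw [← Multiset.sum_coe, coe_sortedParts, μ.1.parts_sum]⟩
  invFun l := ⟨⟨l.1, fun hx => l.2.2.1 _ hx, l.2.2.2⟩, by
    rw [sortedParts_eq_of_pairwise (l.2.1.pairwise_gt.imp le_of_lt) rfl]; exact l.2.1⟩
  left_inv μ := Subtype.ext (Nat.Partition.ext (coe_sortedParts μ.1))
  right_inv l := Subtype.ext (sortedParts_eq_of_pairwise (l.2.1.pairwise_gt.imp le_of_lt) rfl)

theorem s_eq_card_sdLists (n : ℕ) : s n = Nat.card (sdLists n) :=
  Nat.card_congr (sdPartitionEquivSdLists n)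

theorem modifyHead_add_one_mem_sdLists {n : ℕ} {l : List ℕ} (hl : l ∈ sdLists n) (hn : n ≠ 0) :
    l.modifyHead (· + 1) ∈ sdLists (n + 1) := by
  obtain ⟨hsd, hpos, hsum⟩ := hl
  cases l with
  | nil => exact absurd hsum.symm hn
  | cons a r =>
    rw [List.forall_mem_cons] at hpos
    rw [List.sum_cons] at hsum
    rw [List.modifyHead_cons]
    refine ⟨hsd.cons_add_one, List.forall_mem_cons.2 ⟨a.succ_pos, hpos.2⟩, ?_⟩
    rw [List.sum_cons]
    omega

theorem modifyHead_sub_one_mem_sdLists {n : ℕ} {l : List ℕ} (hl : l ∈ sdLists (n + 1))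
    (hn : Odd n) : l.modifyHead (· - 1) ∈ sdLists n := by
  obtain ⟨hsd, hpos, hsum⟩ := hl
  cases l with
  | nil => exact absurd hsum (Nat.succ_ne_zero n).symm
  | cons a r =>
    rw [List.forall_mem_cons] at hpos
    rw [List.sum_cons] at hsum
    obtain ⟨ha, hsd'⟩ := hsd.cons_sub_one hpos.1 (hsum ▸ hn.add_one)
    rw [List.modifyHead_cons]
    refine ⟨hsd', List.forall_mem_cons.2 ⟨Nat.sub_pos_of_lt ha, hpos.2⟩, ?_⟩
    rw [List.sum_cons]
    omega

def sdListsEquivOfOdd {n : ℕ} (hn : Odd n) : sdLists n ≃ sdLists (n + 1) where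
  toFun l := ⟨_, modifyHead_add_one_mem_sdLists l.2 (by rintro rfl; exact Nat.not_odd_zero hn)⟩
  invFun l := ⟨_, modifyHead_sub_one_mem_sdLists l.2 hn⟩
  left_inv l := Subtype.ext <| by
    simp only [List.modifyHead_modifyHead, Function.comp_def, Nat.add_sub_cancel]
    exact congrFun List.modifyHead_id _
  right_inv := by
    rintro ⟨_ | ⟨a, r⟩, hl⟩
    · exact absurd hl.2.2 (Nat.succ_ne_zero n).symm
    · have ha : 0 < a := hl.2.1 a List.mem_cons_self
      exact Subtype.ext (by simp [Nat.sub_add_cancel ha])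

theorem s_eq_s_add_one_of_odd {n : ℕ} (hn : Odd n) : s n = s (n + 1) := by
  rw [s_eq_card_sdLists, s_eq_card_sdLists]
  exact Nat.card_congr (sdListsEquivOfOdd hn)

theorem sd_count_odd_eq_even_general (k : ℕ) :
    s (2 * k - 1) = s (2 * k) := by
  cases k with
  | zero => rfl -- truncated subtraction: `2 * 0 - 1 = 0`
  | succ j =>
    have h := s_eq_s_add_one_of_odd (odd_two_mul_add_one j)
    rwa [show 2 * j + 1 + 1 = 2 * (j + 1) by ring, show 2 * j + 1 = 2 * (j + 1) - 1 by omega] at h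

/-- The number `s n` of sd-partitions of `n` satisfies `s(2k-1) = s(2k)` for
all `k ≥ 1`. -/
theorem sd_count_odd_eq_even (k : ℕ) (hk : 1 ≤ k) :
    s (2 * k - 1) = s (2 * k) :=
  sd_count_odd_eq_even_general k
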